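/- arXiv:2605.10919 — 3 statements merged into one kernel-verified Lean document; each statement's English description precedes it below -/
import Mathlib

section
/- For every integer d ≥ 1 and every probability vector p ∈ ℝ^d, the extended-valued integral ∫⁻_{t∈(0,1)} (−log(1−t))/p'(t) dt is strictly greater than π/4; i.e., the lower bound π/4 is never attained (equality in the Cauchy–Schwarz argument would require the polynomial p'(t) to be proportional to √(−log(1−t)), which is impossible). -/
open MeasureTheory Real

/-- `p'(t) = ∑_{i=1}^d i·p_i·t^{i-1}`, where the probability vector `p : Fin d → ℝ`
has `p i` corresponding to degree `i + 1`. -/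
noncomputable def pderiv {d : ℕ} (p : Fin d → ℝ) (t : ℝ) : ℝ :=
  ∑ i : Fin d, ((i : ℕ) + 1 : ℝ) * p i * t ^ (i : ℕ)


lemma image_aux : (fun x : ℝ => 1 - Real.exp (-x)) '' Set.Ioi 0 = Set.Ioo 0 1 := by
  ext y
  simp only [Set.mem_image, Set.mem_Ioi, Set.mem_Ioo]
  constructor
  · rintro ⟨x, hx, rfl⟩
    have h1 : Real.exp (-x) < 1 := Real.exp_lt_one_iff.2 (by simpa using hx)
    have h2 : 0 < Real.exp (-x) := Real.exp_pos _
    constructor <;> linarith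
  · rintro ⟨h1, h2⟩
    have hlog : Real.log (1 - y) < 0 := Real.log_neg (by linarith) (by linarith)
    refine ⟨-Real.log (1 - y), by linarith, ?_⟩
    rw [neg_neg, Real.exp_log (by linarith)]; ring

lemma sqrtL_cov :
    (∫ t in Set.Ioo (0:ℝ) 1, Real.sqrt (-Real.log (1 - t)))
      = ∫ x in Set.Ioi (0:ℝ), Real.exp (-x) * x ^ ((1:ℝ)/2) ∧
    IntegrableOn (fun t => Real.sqrt (-Real.log (1 - t))) (Set.Ioo (0:ℝ) 1) := by
  have hderiv : ∀ x ∈ Set.Ioi (0:ℝ),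
      HasDerivWithinAt (fun x : ℝ => 1 - Real.exp (-x)) (Real.exp (-x)) (Set.Ioi 0) x := by
    intro x _
    have : HasDerivAt (fun x : ℝ => 1 - Real.exp (-x)) (Real.exp (-x)) x := by
      have h := ((Real.hasDerivAt_exp (-x)).comp x (hasDerivAt_neg x)).const_sub 1
      simpa using h
    exact this.hasDerivWithinAt
  have hinj : Set.InjOn (fun x : ℝ => 1 - Real.exp (-x)) (Set.Ioi 0) := by
    intro a _ b _ h
    have : Real.exp (-a) = Real.exp (-b) := by dsimp at h; linarith
    have := Real.exp_injective this
    linarith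
  have key := integral_image_eq_integral_abs_deriv_smul measurableSet_Ioi hderiv hinj
      (fun t => Real.sqrt (-Real.log (1 - t)))
  have keyI := integrableOn_image_iff_integrableOn_abs_deriv_smul measurableSet_Ioi hderiv hinj
      (fun t => Real.sqrt (-Real.log (1 - t)))
  rw [image_aux] at key keyI
  have heq : ∀ x ∈ Set.Ioi (0:ℝ),
      |Real.exp (-x)| • Real.sqrt (-Real.log (1 - (1 - Real.exp (-x))))
        = Real.exp (-x) * x ^ ((1:ℝ)/2) := by
    intro x hx
    rw [abs_of_pos (Real.exp_pos _)]
    simp only [sub_sub_cancel, Real.log_exp, neg_neg, smul_eq_mul]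
    rw [Real.sqrt_eq_rpow]
  constructor
  · rw [key]
    exact setIntegral_congr_fun measurableSet_Ioi heq
  · rw [keyI]
    have := Real.GammaIntegral_convergent (s := 3/2) (by norm_num)
    refine (integrableOn_congr_fun (fun x hx => (heq x hx)) measurableSet_Ioi).mpr ?_
    simpa [show (3:ℝ)/2 - 1 = 1/2 by norm_num] using this

lemma gamma_val : Real.Gamma (3/2) = Real.sqrt π / 2 := by
  rw [show (3:ℝ)/2 = 1/2 + 1 by norm_num, Real.Gamma_add_one (by norm_num),
    Real.Gamma_one_half_eq]; ring

lemma Q_cont {d : ℕ} (p : Fin d → ℝ) : Continuous (pderiv p) := by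
  unfold pderiv
  exact continuous_finset_sum _ fun i _ => continuous_const.mul (continuous_pow _)

lemma Q_integral {d : ℕ} (p : Fin d → ℝ) (hp1 : ∑ i, p i = 1) :
    ∫ t in Set.Ioo (0:ℝ) 1, pderiv p t = 1 := by
  have h0 : ∫ t in Set.Ioo (0:ℝ) 1, pderiv p t = ∫ t in (0:ℝ)..1, pderiv p t := by
    rw [intervalIntegral.integral_of_le zero_le_one, MeasureTheory.integral_Ioc_eq_integral_Ioo]
  rw [h0]
  unfold pderiv
  rw [intervalIntegral.integral_finset_sum (f := fun (i : Fin d) (t : ℝ) => ((i:ℕ)+1:ℝ) * p i * t ^ (i:ℕ))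
    (fun i _ => ((continuous_const.mul (continuous_pow _)).intervalIntegrable _ _))]
  have he : ∀ i : Fin d, ∫ t in (0:ℝ)..1, ((i:ℕ)+1:ℝ) * p i * t ^ (i:ℕ) = p i := by
    intro i
    rw [intervalIntegral.integral_const_mul, integral_pow]
    have : ((i:ℕ):ℝ) + 1 ≠ 0 := by positivity
    field_simp
    simp
  rw [Finset.sum_congr rfl fun i _ => he i, hp1]

lemma Q_pos {d : ℕ} (p : Fin d → ℝ) (hp0 : ∀ i, 0 ≤ p i) (hp1 : ∑ i, p i = 1)
    {t : ℝ} (ht : 0 < t) : 0 < pderiv p t := by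
  obtain ⟨i0, -, hi0⟩ := Finset.exists_ne_zero_of_sum_ne_zero (by rw [hp1]; norm_num :
    ∑ i : Fin d, p i ≠ 0)
  refine Finset.sum_pos' (fun i _ => mul_nonneg (mul_nonneg (by positivity) (hp0 i)) (pow_nonneg ht.le _)) ⟨i0, Finset.mem_univ _, ?_⟩
  have : 0 < p i0 := lt_of_le_of_ne (hp0 i0) (Ne.symm hi0)
  positivity

lemma Q_le {d : ℕ} (p : Fin d → ℝ) (hp0 : ∀ i, 0 ≤ p i) (hp1 : ∑ i, p i = 1)
    {t : ℝ} (ht0 : 0 ≤ t) (ht1 : t ≤ 1) : pderiv p t ≤ d := by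
  unfold pderiv
  calc ∑ i : Fin d, ((i : ℕ) + 1 : ℝ) * p i * t ^ (i : ℕ)
      ≤ ∑ i : Fin d, (d : ℝ) * p i := by
        refine Finset.sum_le_sum fun i _ => ?_
        have h1 : ((i : ℕ) + 1 : ℝ) ≤ d := by exact_mod_cast (i.2 : (i:ℕ) < d)
        have h2 : t ^ (i : ℕ) ≤ 1 := pow_le_one₀ ht0 ht1
        have h3 : 0 ≤ p i := hp0 i
        nlinarith [mul_le_mul_of_nonneg_left h2 (mul_nonneg (by positivity : (0:ℝ) ≤ ((i:ℕ):ℝ)+1) h3), mul_le_mul_of_nonneg_right h1 h3]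
    _ = d := by rw [← Finset.mul_sum, hp1, mul_one]

lemma sqrtL_eq : ∫ t in Set.Ioo (0:ℝ) 1, Real.sqrt (-Real.log (1 - t)) = Real.sqrt π / 2 := by
  rw [sqrtL_cov.1]
  have h := Real.Gamma_eq_integral (s := 3/2) (by norm_num)
  rw [show (3:ℝ)/2 - 1 = 1/2 by norm_num] at h
  rw [← h, gamma_val]


theorem stmt_1 (d : ℕ) (hd : 1 ≤ d) (p : Fin d → ℝ)
    (hp0 : ∀ i, 0 ≤ p i) (hp1 : ∑ i, p i = 1) :
    ENNReal.ofReal (π / 4) <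
      ∫⁻ t in Set.Ioo (0 : ℝ) 1,
        ENNReal.ofReal ((-Real.log (1 - t)) / pderiv p t) := by
  set L : ℝ → ℝ := fun t => -Real.log (1 - t) with hLdef
  set Q : ℝ → ℝ := pderiv p with hQdef
  set μ : Measure ℝ := volume.restrict (Set.Ioo (0:ℝ) 1) with hμ
  rcases eq_or_ne (∫⁻ t, ENNReal.ofReal (L t / Q t) ∂μ) ⊤ with htop | hfin
  · rw [show (∫⁻ t in Set.Ioo (0 : ℝ) 1, ENNReal.ofReal ((-Real.log (1 - t)) / pderiv p t))
        = ∫⁻ t, ENNReal.ofReal (L t / Q t) ∂μ from rfl, htop]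
    exact ENNReal.ofReal_lt_top
  -- basic facts
  have hQpos : ∀ t ∈ Set.Ioo (0:ℝ) 1, 0 < Q t := fun t ht => Q_pos p hp0 hp1 ht.1
  have hLnn : ∀ t ∈ Set.Ioo (0:ℝ) 1, 0 ≤ L t := by
    intro t ht
    have : Real.log (1 - t) < 0 := Real.log_neg (by linarith [ht.2]) (by linarith [ht.1])
    simp only [hLdef]; linarith
  have hnn : 0 ≤ᵐ[μ] fun t => L t / Q t := by
    have : ∀ᵐ t ∂μ, t ∈ Set.Ioo (0:ℝ) 1 := ae_restrict_mem measurableSet_Ioo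
    filter_upwards [this] with t ht
    exact div_nonneg (hLnn t ht) (hQpos t ht).le
  have hmeas : Measurable fun t => L t / Q t :=
    (Real.measurable_log.comp (measurable_const.sub measurable_id)).neg.div
      (Q_cont p).measurable
  have hint : Integrable (fun t => L t / Q t) μ :=
    ⟨hmeas.aestronglyMeasurable, (hasFiniteIntegral_iff_ofReal hnn).2 hfin.lt_top⟩
  have hkey : (∫⁻ t, ENNReal.ofReal (L t / Q t) ∂μ)
      = ENNReal.ofReal (∫ t, L t / Q t ∂μ) :=
    (ofReal_integral_eq_lintegral_ofReal hint hnn).symm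
  rw [show (∫⁻ t in Set.Ioo (0 : ℝ) 1, ENNReal.ofReal ((-Real.log (1 - t)) / pderiv p t))
      = ∫⁻ t, ENNReal.ofReal (L t / Q t) ∂μ from rfl, hkey]
  -- reduce to real inequality
  have hmain : π / 4 < ∫ t, L t / Q t ∂μ := by
    set c : ℝ := Real.sqrt π / 2 with hc
    set g : ℝ → ℝ := fun t => Real.sqrt (L t / Q t) - c * Real.sqrt (Q t) with hg
    set F : ℝ → ℝ := fun t => L t / Q t - Real.sqrt π * Real.sqrt (L t) + π/4 * Q t with hF
    have hae : (fun t => g t ^ 2) =ᵐ[μ] F := by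
      have hmem : ∀ᵐ t ∂μ, t ∈ Set.Ioo (0:ℝ) 1 := ae_restrict_mem measurableSet_Ioo
      filter_upwards [hmem] with t ht
      have hb := hQpos t ht
      have ha := hLnn t ht
      have h1 : Real.sqrt (L t / Q t) * Real.sqrt (Q t) = Real.sqrt (L t) := by
        rw [← Real.sqrt_mul (div_nonneg ha hb.le), div_mul_cancel₀ _ hb.ne']
      have h2 : Real.sqrt (L t / Q t) ^ 2 = L t / Q t := Real.sq_sqrt (div_nonneg ha hb.le)
      have h3 : Real.sqrt (Q t) ^ 2 = Q t := Real.sq_sqrt hb.le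
      have h4 : Real.sqrt π ^ 2 = π := Real.sq_sqrt pi_nonneg
      have : g t ^ 2 = Real.sqrt (L t / Q t) ^ 2
          - 2 * c * (Real.sqrt (L t / Q t) * Real.sqrt (Q t)) + c ^ 2 * Real.sqrt (Q t) ^ 2 := by
        simp only [hg]; ring
      rw [this, h1, h2, h3, hc]
      simp only [hF]
      nlinarith [h4]
    have h_intL : IntegrableOn (fun t => Real.sqrt (L t)) (Set.Ioo (0:ℝ) 1) := sqrtL_cov.2
    have h_intQ : IntegrableOn Q (Set.Ioo (0:ℝ) 1) :=
      ((Q_cont p).integrableOn_Icc).mono_set Set.Ioo_subset_Icc_self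
    have hI1 : Integrable (fun t => Real.sqrt π * Real.sqrt (L t)) μ := h_intL.const_mul _
    have hI2 : Integrable (fun t => π/4 * Q t) μ := h_intQ.const_mul _
    have hI3 : Integrable (fun t => L t / Q t - Real.sqrt π * Real.sqrt (L t)) μ := hint.sub hI1
    have h_intF : Integrable F μ := hI3.add hI2
    have h_intg2 : Integrable (fun t => g t ^ 2) μ := h_intF.congr hae.symm
    have hFval : ∫ t, F t ∂μ = (∫ t, L t / Q t ∂μ) - π / 4 := by
      simp only [hF]
      rw [integral_add hI3 hI2, integral_sub hint hI1, integral_const_mul, integral_const_mul]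
      rw [show ∫ t, Real.sqrt (L t) ∂μ = Real.sqrt π / 2 from sqrtL_eq,
        show ∫ t, Q t ∂μ = 1 from Q_integral p hp1]
      have hss : Real.sqrt π * Real.sqrt π = π := Real.mul_self_sqrt pi_nonneg
      linear_combination (-(1:ℝ)/2) * hss
    have hpos : 0 < ∫ t, g t ^ 2 ∂μ := by
      rw [integral_pos_iff_support_of_nonneg_ae
        (Filter.Eventually.of_forall fun t => sq_nonneg (g t)) h_intg2]
      set a0 : ℝ := max (1 - Real.exp (-(π/4 * (d:ℝ)^2 + 1))) (1/2) with ha0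
      have ha0lt : a0 < 1 := by
        apply max_lt _ (by norm_num)
        have := Real.exp_pos (-(π/4 * (d:ℝ)^2 + 1))
        linarith
      have hsub : Set.Ioo a0 1 ⊆ Function.support fun t => g t ^ 2 := by
        intro t ht
        have ht01 : t ∈ Set.Ioo (0:ℝ) 1 :=
          ⟨lt_of_lt_of_le (by norm_num) (le_trans (le_max_right _ _) ht.1.le), ht.2⟩
        have hb := hQpos t ht01
        have ha := hLnn t ht01
        have hQd : Q t ≤ d := Q_le p hp0 hp1 ht01.1.le ht01.2.le
        have hLlarge : π/4 * (d:ℝ)^2 + 1 < L t := by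
          have h1t : 1 - t < Real.exp (-(π/4 * (d:ℝ)^2 + 1)) := by
            have := lt_of_le_of_lt (le_max_left _ _) ht.1
            linarith
          have := Real.log_lt_log (by linarith [ht01.2] : (0:ℝ) < 1 - t) h1t
          rw [Real.log_exp] at this
          simp only [hLdef]; linarith
        simp only [Function.mem_support]
        intro hgz
        have hgz' : Real.sqrt (L t / Q t) = c * Real.sqrt (Q t) := by
          have hg0 : g t = 0 := by
            have := sq_nonneg (g t)
            nlinarith [hgz]
          simp only [hg] at hg0; linarith
        have hsq : L t / Q t = c ^ 2 * Q t := by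
          have := congrArg (fun x => x ^ 2) hgz'
          simp only [mul_pow] at this
          rwa [Real.sq_sqrt (div_nonneg ha hb.le), Real.sq_sqrt hb.le] at this
        have hLeq : L t = c ^ 2 * Q t ^ 2 := by
          have h' := congrArg (fun x => x * Q t) hsq
          simp only [div_mul_cancel₀ _ hb.ne'] at h'
          rw [h']; ring
        have hc2 : c ^ 2 = π / 4 := by
          rw [hc, div_pow, Real.sq_sqrt pi_nonneg]; norm_num
        have hdpos : (0:ℝ) ≤ d := Nat.cast_nonneg d
        have hQ2 : Q t ^ 2 ≤ (d:ℝ) ^ 2 := by nlinarith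
        have hmul := mul_le_mul_of_nonneg_left hQ2 (by positivity : (0:ℝ) ≤ π/4)
        rw [hc2] at hLeq
        linarith
      refine lt_of_lt_of_le ?_ (measure_mono hsub)
      · 
            rw [hμ, Measure.restrict_apply' measurableSet_Ioo]
            have : Set.Ioo a0 1 ∩ Set.Ioo (0:ℝ) 1 = Set.Ioo a0 1 := by
              apply Set.inter_eq_self_of_subset_left
              intro t ht
              exact ⟨lt_of_lt_of_le (by norm_num)
                (le_trans (le_max_right _ _) ht.1.le), ht.2⟩
            rw [this, Real.volume_Ioo]
            exact ENNReal.ofReal_pos.2 (by linarith)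
    have h2 : 0 < ∫ t, F t ∂μ := by rwa [integral_congr_ae hae] at hpos
    rw [hFval] at h2
    linarith
  exact (ENNReal.ofReal_lt_ofReal_iff (lt_trans (by positivity) hmain)).2 hmain
end

section
/- Strict suboptimality of every finite maximum degree: for every integer d ≥ 2 and every probability vector p ∈ ℝ^d, there exist an integer D > d and a probability vector q ∈ ℝ^D such that the extended-valued integral ∫⁻_{t∈(0,1)} (−log(1−t))/q'(t) dt is strictly smaller than ∫⁻_{t∈(0,1)} (−log(1−t))/p'(t) dt. -/
/-!
If `f(p) = ∞`, the point mass on degree 1 already does better: its `p'` is `1` and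
`∫₀¹ -log (1 - t) dt = 1`. Otherwise mix `p` with a point mass of weight `ε = 8d/K` on the
degree `K + 1`, `K` large. Below `s = 1 - 1/(2K)` the new `q'` is at least `(1 - ε) p'`, which
costs at most a factor `1 + 2ε`, i.e. an additive `O(d f(p) / K)`. Above `s`, Bernoulli gives
`t^K ≥ 1/2`, so `q' ≥ ε (K + 1) / 2 ≥ 4d ≥ 4p'`: the cost of `[s, 1)` drops by a factor `4`, and
that cost is at least `log K / (2Kd)` since `p' ≤ d` there. For `log K ≫ d² f(p)` the gain wins.
-/

open MeasureTheory Real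

open Set Filter
open scoped ENNReal

section Algebra
variable {d : ℕ}

lemma pderiv_add (p q : Fin d → ℝ) (t : ℝ) : pderiv (p + q) t = pderiv p t + pderiv q t := by
  simp only [pderiv, Pi.add_apply, mul_add, add_mul, Finset.sum_add_distrib]

lemma pderiv_smul (c : ℝ) (p : Fin d → ℝ) (t : ℝ) : pderiv (c • p) t = c * pderiv p t := by
  simp only [pderiv, Pi.smul_apply, smul_eq_mul, Finset.mul_sum]
  exact Finset.sum_congr rfl fun _ _ => by ring

lemma pderiv_single (i : Fin d) (c t : ℝ) :
    pderiv (Pi.single i c) t = ((i : ℕ) + 1) * c * t ^ (i : ℕ) := by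
  simp [pderiv, Pi.single_apply]

lemma pderiv_append_zero (p : Fin d → ℝ) (n : ℕ) (t : ℝ) :
    pderiv (Fin.append p (0 : Fin n → ℝ)) t = pderiv p t := by
  simp [pderiv, Fin.sum_univ_add]

lemma sum_append_zero (p : Fin d → ℝ) (n : ℕ) :
    ∑ i, Fin.append p (0 : Fin n → ℝ) i = ∑ i, p i := by
  simp [Fin.sum_univ_add]

end Algebra

/-- `(1 - ε) p + ε δ_{d+m+1}`, as a distribution on the degrees `1, …, d + m + 1`. -/
noncomputable def mixTop {d : ℕ} (p : Fin d → ℝ) (m : ℕ) (ε : ℝ) : Fin (d + (m + 1)) → ℝ :=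
  (1 - ε) • Fin.append p 0 + Pi.single (M := fun _ : Fin (d + (m + 1)) => ℝ) (Fin.last (d + m)) ε

section Mixture
variable {d : ℕ} {p : Fin d → ℝ} {m : ℕ} {ε : ℝ}

lemma mixTop_nonneg (hp0 : ∀ i, 0 ≤ p i) (hε0 : 0 ≤ ε) (hε1 : ε ≤ 1) (i : Fin (d + (m + 1))) :
    0 ≤ mixTop p m ε i := by
  have happend : 0 ≤ Fin.append p (0 : Fin (m + 1) → ℝ) i := by
    refine Fin.addCases (fun j => ?_) (fun j => ?_) i <;> simp [hp0]
  have hsingle : 0 ≤ Pi.single (M := fun _ : Fin (d + (m + 1)) => ℝ) (Fin.last (d + m)) ε i := by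
    rw [Pi.single_apply]; positivity
  exact add_nonneg (mul_nonneg (by linarith) happend) hsingle

lemma sum_mixTop (hp1 : ∑ i, p i = 1) : ∑ i, mixTop p m ε i = 1 := by
  simp [mixTop, Finset.sum_add_distrib, ← Finset.mul_sum, sum_append_zero, hp1]

lemma pderiv_mixTop (t : ℝ) :
    pderiv (mixTop p m ε) t = (1 - ε) * pderiv p t + ε * ((d + m : ℕ) + 1) * t ^ (d + m) := by
  rw [mixTop, pderiv_add, pderiv_smul, pderiv_append_zero, pderiv_single, Fin.val_last]
  ring

end Mixture

section Bounds
variable {d : ℕ} {p : Fin d → ℝ}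

lemma pderiv_nonneg (hp0 : ∀ i, 0 ≤ p i) {t : ℝ} (ht : 0 ≤ t) : 0 ≤ pderiv p t :=
  Finset.sum_nonneg fun i _ => by have := hp0 i; positivity

lemma pderiv_pos (hp0 : ∀ i, 0 ≤ p i) (hp1 : ∑ i, p i = 1) {t : ℝ} (ht : 0 < t) :
    0 < pderiv p t := by
  obtain ⟨j, -, hj⟩ : ∃ j ∈ Finset.univ, (0 : ℝ) < p j :=
    Finset.exists_lt_of_sum_lt (f := fun _ => 0) (by simp [hp1])
  exact Finset.sum_pos' (fun i _ => by have := hp0 i; positivity)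
    ⟨j, Finset.mem_univ j, by positivity⟩

lemma pderiv_le_card (hp0 : ∀ i, 0 ≤ p i) (hp1 : ∑ i, p i = 1) {t : ℝ} (ht0 : 0 ≤ t)
    (ht1 : t ≤ 1) : pderiv p t ≤ d := by
  calc pderiv p t ≤ ∑ i, (d : ℝ) * p i := by
        refine Finset.sum_le_sum fun i _ => ?_
        have hi : ((i : ℕ) + 1 : ℝ) ≤ d := by exact_mod_cast i.isLt
        calc ((i : ℕ) + 1 : ℝ) * p i * t ^ (i : ℕ) ≤ ((i : ℕ) + 1 : ℝ) * p i * 1 := by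
              gcongr
              · exact mul_nonneg (by positivity) (hp0 i)
              · exact pow_le_one₀ ht0 ht1
          _ ≤ d * p i := by rw [mul_one]; exact mul_le_mul_of_nonneg_right hi (hp0 i)
    _ = d := by rw [← Finset.mul_sum, hp1, mul_one]

lemma continuous_pderiv (p : Fin d → ℝ) : Continuous (pderiv p) := by
  unfold pderiv; fun_prop

variable {m : ℕ} {ε : ℝ}

lemma one_sub_mul_pderiv_le_pderiv_mixTop (hε0 : 0 ≤ ε) {t : ℝ} (ht : 0 ≤ t) :
    (1 - ε) * pderiv p t ≤ pderiv (mixTop p m ε) t := by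
  rw [pderiv_mixTop]
  have : 0 ≤ ε * ((d + m : ℕ) + 1) * t ^ (d + m) := by positivity
  linarith

lemma half_le_one_sub_inv_pow (K : ℕ) : (1 : ℝ) / 2 ≤ (1 - (2 * K : ℝ)⁻¹) ^ K := by
  rcases K.eq_zero_or_pos with rfl | hK
  · norm_num
  have hK1 : (1 : ℝ) ≤ K := by exact_mod_cast hK
  have hBernoulli := one_add_mul_le_pow (a := -(2 * K : ℝ)⁻¹)
    (by linarith [inv_le_one_of_one_le₀ (show (1 : ℝ) ≤ 2 * K by linarith)]) K
  have hhalf : (K : ℝ) * (2 * K : ℝ)⁻¹ = 1 / 2 := by field_simp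
  rw [← sub_eq_add_neg] at hBernoulli
  linarith

lemma four_mul_pderiv_le_pderiv_mixTop (hp0 : ∀ i, 0 ≤ p i) (hp1 : ∑ i, p i = 1)
    (hε1 : ε ≤ 1) (hε : 8 * d ≤ ε * ((d + m : ℕ) + 1)) {t : ℝ} (ht0 : 0 ≤ t) (ht1 : t ≤ 1)
    (hpow : 1 / 2 ≤ t ^ (d + m)) : 4 * pderiv p t ≤ pderiv (mixTop p m ε) t := by
  have hp_le := pderiv_le_card hp0 hp1 ht0 ht1
  have hK : (0 : ℝ) < (d + m : ℕ) + 1 := by positivity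
  have hε0 : 0 ≤ ε := by nlinarith [show (0 : ℝ) ≤ d by positivity]
  have hp_nonneg := pderiv_nonneg hp0 ht0
  have htop := mul_le_mul_of_nonneg_left hpow (by positivity : 0 ≤ ε * ((d + m : ℕ) + 1))
  rw [pderiv_mixTop]
  nlinarith [mul_nonneg (sub_nonneg.mpr hε1) hp_nonneg]

end Bounds

noncomputable def costDensity {d : ℕ} (p : Fin d → ℝ) (t : ℝ) : ℝ≥0∞ :=
  ENNReal.ofReal (-log (1 - t) / pderiv p t)

/-- The paper's `f(p)`. -/
noncomputable def accessCost {d : ℕ} (p : Fin d → ℝ) : ℝ≥0∞ :=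
  ∫⁻ t in Ioo 0 1, costDensity p t

section Cost
variable {d n : ℕ} {p : Fin d → ℝ} {q : Fin n → ℝ}

lemma measurable_costDensity (p : Fin d → ℝ) : Measurable (costDensity p) :=
  (((measurable_const.sub measurable_id).log).neg.div
    (continuous_pderiv p).measurable).ennreal_ofReal

lemma costDensity_le_of_mul_le {c t : ℝ} (hc : 0 < c) (ht0 : 0 ≤ t) (ht1 : t < 1)
    (hp : 0 < pderiv p t) (hpq : c * pderiv p t ≤ pderiv q t) :
    costDensity q t ≤ ENNReal.ofReal c⁻¹ * costDensity p t := by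
  have hlog : 0 ≤ -log (1 - t) := neg_nonneg.mpr (log_nonpos (by linarith) (by linarith))
  rw [costDensity, costDensity, ← ENNReal.ofReal_mul (inv_nonneg.mpr hc.le)]
  refine ENNReal.ofReal_le_ofReal ?_
  calc -log (1 - t) / pderiv q t ≤ -log (1 - t) / (c * pderiv p t) :=
        div_le_div_of_nonneg_left hlog (by positivity) hpq
    _ = c⁻¹ * (-log (1 - t) / pderiv p t) := by field_simp

lemma accessCost_eq_add (p : Fin d → ℝ) {s : ℝ} (hs0 : 0 < s) (hs1 : s ≤ 1) :
    accessCost p = (∫⁻ t in Ioo 0 s, costDensity p t) + ∫⁻ t in Ico s 1, costDensity p t := by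
  rw [accessCost, ← Ioo_union_Ico_eq_Ioo hs0 hs1,
    lintegral_union measurableSet_Ico (Ico_disjoint_Ico_same.mono_left Ioo_subset_Ico_self)]

lemma accessCost_le_of_split (hp0 : ∀ i, 0 ≤ p i) (hp1 : ∑ i, p i = 1) {s c₁ c₂ : ℝ}
    (hs0 : 0 < s) (hs1 : s < 1) (hc₁ : 0 < c₁) (hc₂ : 0 < c₂)
    (hlow : ∀ t ∈ Ioo 0 s, c₁ * pderiv p t ≤ pderiv q t)
    (hhigh : ∀ t ∈ Ico s 1, c₂ * pderiv p t ≤ pderiv q t) :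
    accessCost q ≤ ENNReal.ofReal c₁⁻¹ * (∫⁻ t in Ioo 0 s, costDensity p t) +
      ENNReal.ofReal c₂⁻¹ * ∫⁻ t in Ico s 1, costDensity p t := by
  rw [accessCost_eq_add q hs0 hs1.le, ← lintegral_const_mul' _ _ ENNReal.ofReal_ne_top,
    ← lintegral_const_mul' _ _ ENNReal.ofReal_ne_top]
  refine add_le_add (setLIntegral_mono ((measurable_costDensity p).const_mul _) fun t ht => ?_)
    (setLIntegral_mono ((measurable_costDensity p).const_mul _) fun t ht => ?_)
  · exact costDensity_le_of_mul_le hc₁ ht.1.le (ht.2.trans hs1) (pderiv_pos hp0 hp1 ht.1)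
      (hlow t ht)
  · exact costDensity_le_of_mul_le hc₂ (hs0.le.trans ht.1) ht.2
      (pderiv_pos hp0 hp1 (hs0.trans_le ht.1)) (hhigh t ht)

lemma ofReal_le_setLIntegral_Ico_costDensity (hp0 : ∀ i, 0 ≤ p i) (hp1 : ∑ i, p i = 1)
    {s : ℝ} (hs0 : 0 < s) (hs1 : s < 1) :
    ENNReal.ofReal ((1 - s) * -log (1 - s) / d) ≤ ∫⁻ t in Ico s 1, costDensity p t := by
  have hlog : 0 ≤ -log (1 - s) := neg_nonneg.mpr (log_nonpos (by linarith) (by linarith))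
  calc ENNReal.ofReal ((1 - s) * -log (1 - s) / d)
      = ∫⁻ _ in Ico s 1, ENNReal.ofReal (-log (1 - s) / d) := by
        rw [setLIntegral_const, Real.volume_Ico, ← ENNReal.ofReal_mul (by positivity)]
        ring_nf
    _ ≤ ∫⁻ t in Ico s 1, costDensity p t := by
        refine setLIntegral_mono (measurable_costDensity p) fun t ⟨hst, ht1⟩ => ?_
        have ht0 : 0 < t := hs0.trans_le hst
        refine ENNReal.ofReal_le_ofReal (div_le_div₀ ?_ ?_ (pderiv_pos hp0 hp1 ht0)
          (pderiv_le_card hp0 hp1 ht0.le ht1.le))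
        · exact neg_nonneg.mpr (log_nonpos (by linarith) (by linarith))
        · exact neg_le_neg (log_le_log (by linarith) (by linarith))

lemma accessCost_single_zero_lt_top (n : ℕ) :
    accessCost (Pi.single (0 : Fin (n + 1)) 1) < ⊤ := by
  have hp : ∀ t, pderiv (Pi.single (0 : Fin (n + 1)) 1) t = 1 := by simp [pderiv_single]
  have hint : IntervalIntegrable (fun t => log (1 - t)) volume 0 1 := by
    simpa using (intervalIntegral.intervalIntegrable_log' (a := 1) (b := 0)).comp_sub_left 1
  simp only [accessCost, costDensity, hp, div_one]
  exact ((intervalIntegrable_iff_integrableOn_Ioo_of_le zero_le_one).mp hint).neg.setLIntegral_lt_top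

end Cost

lemma ofReal_inv_one_sub_mul_add_lt {A G : ℝ≥0∞} (hA : A ≠ ⊤) (hG : G ≠ ⊤) {ε : ℝ}
    (hε0 : 0 ≤ ε) (hε : ε ≤ 1 / 2) (hgain : 8 * ε * (A + G).toReal < 3 * G.toReal) :
    ENNReal.ofReal (1 - ε)⁻¹ * A + ENNReal.ofReal 4⁻¹ * G < A + G := by
  have hinv : 0 ≤ (1 - ε)⁻¹ := inv_nonneg.mpr (by linarith)
  rw [ENNReal.toReal_add hA hG] at hgain
  rw [← ENNReal.ofReal_toReal hA, ← ENNReal.ofReal_toReal hG,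
    ← ENNReal.ofReal_mul hinv, ← ENNReal.ofReal_mul (by norm_num),
    ← ENNReal.ofReal_add (by positivity) (by positivity),
    ← ENNReal.ofReal_add (by positivity) (by positivity),
    ENNReal.ofReal_lt_ofReal_iff_of_nonneg (by positivity)]
  have hinv_le : (1 - ε)⁻¹ ≤ 1 + 2 * ε := by
    rw [inv_le_iff_one_le_mul₀ (by linarith)]
    nlinarith
  nlinarith [mul_le_mul_of_nonneg_right hinv_le A.toReal_nonneg, G.toReal_nonneg]

theorem exists_accessCost_mixTop_lt {d : ℕ} {p : Fin d → ℝ} (hp0 : ∀ i, 0 ≤ p i)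
    (hp1 : ∑ i, p i = 1) (hF : accessCost p ≠ ⊤) :
    ∃ m ε, 0 ≤ ε ∧ ε ≤ 1 ∧ accessCost (mixTop p m ε) < accessCost p := by
  have hd : 0 < d := Nat.pos_of_ne_zero (by rintro rfl; simp at hp1)
  obtain ⟨K, hlogK, hK⟩ : ∃ K : ℕ, 128 * (accessCost p).toReal * d ^ 2 / 3 < log K ∧ 16 * d ≤ K :=
    (((tendsto_log_atTop.comp tendsto_natCast_atTop_atTop).eventually_gt_atTop _).and
      (eventually_ge_atTop _)).exists
  obtain ⟨m, rfl⟩ := Nat.exists_eq_add_of_le (show d ≤ K by omega)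
  have hK16 : 16 * (d : ℝ) ≤ (d + m : ℕ) := by exact_mod_cast hK
  set K : ℝ := ((d + m : ℕ) : ℝ)
  have hd1 : (1 : ℝ) ≤ d := by exact_mod_cast hd
  set ε : ℝ := 8 * d / K
  set s : ℝ := 1 - (2 * K)⁻¹
  have hεK : ε * K = 8 * d := div_mul_cancel₀ _ (by positivity)
  have hε0 : 0 ≤ ε := by positivity
  have hε : ε ≤ 1 / 2 := by rw [div_le_iff₀ (by linarith)]; linarith
  have hs0 : 0 < s := by linarith [inv_lt_one_of_one_lt₀ (show 1 < 2 * K by linarith)]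
  have hs1 : s < 1 := by linarith [inv_pos.mpr (show 0 < 2 * K by linarith)]
  have hcost := accessCost_le_of_split hp0 hp1 hs0 hs1 (by linarith : (0 : ℝ) < 1 - ε) four_pos
    (fun t ht => one_sub_mul_pderiv_le_pderiv_mixTop hε0 ht.1.le)
    (fun t ht => four_mul_pderiv_le_pderiv_mixTop hp0 hp1 (by linarith) (by linarith)
      (hs0.le.trans ht.1) ht.2.le
      ((half_le_one_sub_inv_pow (d + m)).trans (pow_le_pow_left₀ hs0.le ht.1 _)))
  have hGlow := ofReal_le_setLIntegral_Ico_costDensity hp0 hp1 hs0 hs1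
  have hsplit := accessCost_eq_add p hs0 hs1.le
  set G := ∫⁻ t in Ico s 1, costDensity p t
  obtain ⟨hA, hG⟩ := ENNReal.add_ne_top.mp (hsplit ▸ hF)
  refine ⟨m, ε, hε0, by linarith, hcost.trans_lt (hsplit ▸ ?_)⟩
  refine ofReal_inv_one_sub_mul_add_lt hA hG hε0 hε ?_
  have h1s : 1 - s = (2 * K)⁻¹ := by ring
  calc 8 * ε * (_ + G).toReal = 64 * d * (accessCost p).toReal / K := by
        rw [← hsplit]; field_simp; ring
    _ < 3 * log K / (2 * K * d) := by
        rw [div_lt_div_iff₀ (by linarith) (by positivity)]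
        nlinarith [mul_lt_mul_of_pos_left hlogK (show 0 < 3 * K by linarith)]
    _ = 3 * ((1 - s) * log K / d) := by rw [h1s]; field_simp
    _ ≤ 3 * ((1 - s) * -log (1 - s) / d) := by
        rw [h1s, log_inv, neg_neg]; gcongr; linarith
    _ ≤ 3 * G.toReal := by linarith [(ENNReal.ofReal_le_iff_le_toReal hG).mp hGlow]

theorem stmt_10_general (d : ℕ) (p : Fin d → ℝ)
    (hp0 : ∀ i, 0 ≤ p i) (hp1 : ∑ i, p i = 1) :
    ∃ D : ℕ, d < D ∧ ∃ q : Fin D → ℝ, (∀ i, 0 ≤ q i) ∧ ∑ i, q i = 1 ∧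
      (∫⁻ t in Set.Ioo (0 : ℝ) 1,
          ENNReal.ofReal ((-Real.log (1 - t)) / pderiv q t)) <
        ∫⁻ t in Set.Ioo (0 : ℝ) 1,
          ENNReal.ofReal ((-Real.log (1 - t)) / pderiv p t) := by
  change ∃ D : ℕ, d < D ∧ ∃ q : Fin D → ℝ, (∀ i, 0 ≤ q i) ∧ ∑ i, q i = 1 ∧
    accessCost q < accessCost p
  by_cases hF : accessCost p = ⊤
  · refine ⟨d + 1, d.lt_succ_self, Pi.single 0 1,
      fun i => by rw [Pi.single_apply]; positivity, by simp, ?_⟩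
    exact hF ▸ accessCost_single_zero_lt_top d
  · obtain ⟨m, ε, hε0, hε1, hlt⟩ := exists_accessCost_mixTop_lt hp0 hp1 hF
    exact ⟨d + (m + 1), by omega, mixTop p m ε, mixTop_nonneg hp0 hε0 hε1, sum_mixTop hp1, hlt⟩

theorem stmt_10 (d : ℕ) (hd : 2 ≤ d) (p : Fin d → ℝ)
    (hp0 : ∀ i, 0 ≤ p i) (hp1 : ∑ i, p i = 1) :
    ∃ D : ℕ, d < D ∧ ∃ q : Fin D → ℝ, (∀ i, 0 ≤ q i) ∧ ∑ i, q i = 1 ∧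
      (∫⁻ t in Set.Ioo (0 : ℝ) 1,
          ENNReal.ofReal ((-Real.log (1 - t)) / pderiv q t)) <
        ∫⁻ t in Set.Ioo (0 : ℝ) 1,
          ENNReal.ofReal ((-Real.log (1 - t)) / pderiv p t) :=
  stmt_10_general d p hp0 hp1
end

section
/- Dilogarithm formula for the degree-2 objective: for every p₂ ∈ (0,1], ∫₀¹ (−log(1−t)) / ((1−p₂) + 2·p₂·t) dt = (1/(2·p₂)) · ∫₀^{2p₂/(1+p₂)} (−log(1−t))/t dt; in terms of the dilogarithm Li₂(u) := ∫₀^u (−log(1−t))/t dt, the left-hand side equals Li₂(2p₂/(1+p₂)) / (2p₂). -/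
open MeasureTheory Real Set Filter Topology

-- integrability of -log(1-t) on Ioo 0 1
lemma intlog_aux : IntegrableOn (fun t : ℝ => -Real.log (1 - t)) (Set.Ioo (0:ℝ) 1) volume := by
  have h : IntegrableOn (fun t : ℝ => -Real.log (1 - t)) (Set.Ioc (0:ℝ) 1) volume := by
    apply intervalIntegral.integrableOn_deriv_of_nonneg
      (g := fun t : ℝ => (1 - t) * Real.log (1 - t) + t)
    · exact ((Real.continuous_mul_log.comp (continuous_const.sub continuous_id)).add
        continuous_id).continuousOn
    · intro x hx
      have h1x : 0 < 1 - x := by linarith [hx.2]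
      have hu : HasDerivAt (fun t : ℝ => 1 - t) (-1) x := by
        simpa using (hasDerivAt_id x).const_sub 1
      have hlog : HasDerivAt (fun t : ℝ => Real.log (1 - t)) ((1 - x)⁻¹ * (-1)) x :=
        (Real.hasDerivAt_log h1x.ne').comp x hu
      have := (hu.mul hlog).add (hasDerivAt_id x)
      refine this.congr_deriv ?_
      rw [← mul_assoc, mul_inv_cancel₀ h1x.ne']
      ring
    · intro x hx
      have h1x : 0 < 1 - x := by linarith [hx.2]
      have : Real.log (1 - x) ≤ 0 := Real.log_nonpos (by linarith [hx.1]) (by linarith [hx.1])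
      linarith
  exact h.mono_set Set.Ioo_subset_Ioc_self

lemma dilog_aux (a b : ℝ) (ha : 0 < a) (hb : 0 < b) :
    ∫ t in Set.Ioo (0:ℝ) 1, (-Real.log (1 - t)) / (a + b * t) =
      (1 / b) * ∫ t in Set.Ioo (0:ℝ) (b / (a + b)), (-Real.log (1 - t)) / t := by
  have hab : 0 < a + b := by linarith
  set U : ℝ := b / (a + b) with hUdef
  have hU : 0 < U := div_pos hb hab
  have hU1 : U < 1 := (div_lt_one hab).mpr (by linarith)
  set f : ℝ → ℝ := fun t => -Real.log (1 - t) / (a + b * t) with hfdef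
  set h : ℝ → ℝ := fun t => (Real.log (a + b) - Real.log (a + b * t)) / (1 - t) with hhdef
  -- integrability of f on Ioo 0 1
  have hf_int : IntegrableOn f (Set.Ioo (0:ℝ) 1) volume := by
    have : IntegrableOn (fun t : ℝ => (a + b * t)⁻¹ * (-Real.log (1 - t)))
        (Set.Ioo (0:ℝ) 1) volume := by
      apply Integrable.bdd_mul (c := a⁻¹) intlog_aux
      · exact ((measurable_const.add (measurable_id.const_mul b)).inv).aestronglyMeasurable.restrict
      · refine (ae_restrict_iff' measurableSet_Ioo).mpr (ae_of_all _ fun x hx => ?_)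
        have h1 : a ≤ a + b * x := by nlinarith [hx.1]
        have h2 : 0 < a + b * x := by linarith
        rw [Real.norm_eq_abs, abs_of_nonneg (by positivity)]
        exact inv_anti₀ ha h1
    apply this.congr_fun _ measurableSet_Ioo
    intro x hx
    simp [hfdef, div_eq_inv_mul, mul_comm]
  -- integrability of h on Ioo 0 1
  have hbound : ∀ x ∈ Set.Ioo (0:ℝ) 1, 0 ≤ h x ∧ h x ≤ b / a := by
    intro x hx
    have hx0 := hx.1; have hx1 := hx.2
    have h2 : 0 < a + b * x := by nlinarith
    have h3 : a + b * x ≤ a + b := by nlinarith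
    have h1x : 0 < 1 - x := by linarith
    have hN0 : 0 ≤ Real.log (a + b) - Real.log (a + b * x) :=
      sub_nonneg.mpr (Real.log_le_log h2 h3)
    constructor
    · exact div_nonneg hN0 h1x.le
    · have key : Real.log (a + b) - Real.log (a + b * x) ≤ b * (1 - x) / (a + b * x) := by
        rw [← Real.log_div hab.ne' h2.ne']
        have h4 := Real.log_le_sub_one_of_pos (div_pos hab h2)
        have h5 : (a + b) / (a + b * x) - 1 = b * (1 - x) / (a + b * x) := by
          field_simp; ring
        linarith
      have key2 : b * (1 - x) / (a + b * x) ≤ b * (1 - x) / a :=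
        div_le_div_of_nonneg_left (by nlinarith) ha (by nlinarith)
      rw [hhdef]
      rw [div_le_iff₀ h1x]
      calc Real.log (a + b) - Real.log (a + b * x) ≤ b * (1 - x) / a := key.trans key2
        _ = b / a * (1 - x) := by ring
  have hh_int : IntegrableOn h (Set.Ioo (0:ℝ) 1) volume := by
    apply Measure.integrableOn_of_bounded (M := b / a)
    · simp [Real.volume_Ioo]
    · apply Measurable.aestronglyMeasurable
      exact (measurable_const.sub
        ((measurable_const.add (measurable_id.const_mul b)).log)).div
        (measurable_const.sub measurable_id)
    · refine (ae_restrict_iff' measurableSet_Ioo).mpr (ae_of_all _ fun x hx => ?_)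
      obtain ⟨h0x, hxb⟩ := hbound x hx
      rw [Real.norm_eq_abs, abs_of_nonneg h0x]
      exact hxb
  -- substitution in the RHS integral
  have himg : (fun t : ℝ => U * (1 - t)) '' Set.Ioo 0 1 = Set.Ioo 0 U := by
    ext y
    constructor
    · rintro ⟨t, ⟨ht0, ht1⟩, rfl⟩
      constructor
      · show 0 < U * (1 - t)
        nlinarith [mul_pos hU (show (0:ℝ) < 1 - t by linarith)]
      · show U * (1 - t) < U
        nlinarith [mul_pos hU ht0]
    · rintro ⟨hy0, hyU⟩
      refine ⟨1 - y / U, ⟨?_, ?_⟩, ?_⟩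
      · have : y / U < 1 := (div_lt_one hU).mpr hyU
        linarith
      · have : 0 < y / U := div_pos hy0 hU
        linarith
      · field_simp; ring
  have hderivφ : ∀ x ∈ Set.Ioo (0:ℝ) 1,
      HasDerivWithinAt (fun t : ℝ => U * (1 - t)) ((fun _ : ℝ => -U) x) (Set.Ioo 0 1) x := by
    intro x _
    have : HasDerivAt (fun t : ℝ => U * (1 - t)) (U * (-1)) x :=
      ((hasDerivAt_id x).const_sub 1).const_mul U
    simpa using this.hasDerivWithinAt
  have hinj : Set.InjOn (fun t : ℝ => U * (1 - t)) (Set.Ioo 0 1) := by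
    intro x _ y _ hxy
    have := mul_left_cancel₀ hU.ne' hxy
    linarith
  have hsub := MeasureTheory.integral_image_eq_integral_abs_deriv_smul
    measurableSet_Ioo hderivφ hinj (fun v => -Real.log (1 - v) / v)
  rw [himg] at hsub
  have habs : |(-U)| = U := by rw [abs_neg, abs_of_pos hU]
  -- rewrite substituted integrand as h
  have hcongr : ∀ x ∈ Set.Ioo (0:ℝ) 1,
      |(-U)| • (-Real.log (1 - U * (1 - x)) / (U * (1 - x))) = h x := by
    intro x hx
    have h1x : 0 < 1 - x := by linarith [hx.2]
    have hax : 0 < a + b * x := by nlinarith [hx.1]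
    have hval : 1 - U * (1 - x) = (a + b * x) / (a + b) := by
      rw [hUdef]; field_simp; ring
    rw [habs, smul_eq_mul, hval, Real.log_div hax.ne' hab.ne', hhdef]
    rw [hUdef]
    field_simp
    ring
  have hsub2 : ∫ v in Set.Ioo (0:ℝ) U, -Real.log (1 - v) / v
      = ∫ x in Set.Ioo (0:ℝ) 1, h x := by
    rw [hsub]
    exact setIntegral_congr_fun measurableSet_Ioo hcongr
  -- FTC / integration by parts
  set H : ℝ → ℝ := fun t => (-Real.log (1 - t)) * (Real.log (a + b * t) - Real.log (a + b))
    with hHdef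
  have hHderiv : ∀ x ∈ Set.Ioo (0:ℝ) 1, HasDerivAt H (b * f x - h x) x := by
    intro x hx
    have h1x : 0 < 1 - x := by linarith [hx.2]
    have hax : 0 < a + b * x := by nlinarith [hx.1]
    have hu : HasDerivAt (fun t : ℝ => 1 - t) (-1) x := by
      simpa using (hasDerivAt_id x).const_sub 1
    have hl1 : HasDerivAt (fun t : ℝ => -Real.log (1 - t)) (-((1 - x)⁻¹ * (-1))) x :=
      ((Real.hasDerivAt_log h1x.ne').comp x hu).neg
    have hin : HasDerivAt (fun t : ℝ => a + b * t) b x := by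
      simpa using ((hasDerivAt_id x).const_mul b).const_add a
    have hl2 : HasDerivAt (fun t : ℝ => Real.log (a + b * t) - Real.log (a + b))
        ((a + b * x)⁻¹ * b) x :=
      ((Real.hasDerivAt_log hax.ne').comp x hin).sub_const _
    have := hl1.mul hl2
    refine this.congr_deriv ?_
    rw [hfdef, hhdef]
    field_simp
    ring
  have hH0 : Tendsto H (𝓝[>] (0:ℝ)) (𝓝 0) := by
    have hc : ContinuousAt H 0 := by
      apply ContinuousAt.mul
      · apply ContinuousAt.neg
        apply Real.continuousAt_log (by norm_num)
          |>.comp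
        exact (continuous_const.sub continuous_id).continuousAt
      · apply ContinuousAt.sub _ continuousAt_const
        apply Real.continuousAt_log (by simpa using ha.ne')
          |>.comp
        exact (continuous_const.add (continuous_const.mul continuous_id)).continuousAt
    have hH0v : H 0 = 0 := by simp [hHdef]
    simpa [hH0v] using hc.tendsto.mono_left nhdsWithin_le_nhds
  have hH1 : Tendsto H (𝓝[<] (1:ℝ)) (𝓝 0) := by
    set c : ℝ := b / (a + b) with hcdef
    set K : ℝ → ℝ := fun s => (-Real.log s) * Real.log (1 - c * s) with hKdef
    have l1 : Tendsto (fun s : ℝ => s * Real.log s) (𝓝[>] (0:ℝ)) (𝓝 0) := by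
      have := Real.continuous_mul_log.tendsto 0
      simpa using this.mono_left nhdsWithin_le_nhds
    have l2 : Tendsto (fun s : ℝ => Real.log (1 - c * s) / s) (𝓝[>] (0:ℝ)) (𝓝 (-c)) := by
      have hin : HasDerivAt (fun s : ℝ => 1 - c * s) (-c) (0:ℝ) := by
        simpa using ((hasDerivAt_id (0:ℝ)).const_mul c).const_sub 1
      have hd : HasDerivAt (fun s : ℝ => Real.log (1 - c * s)) (-c) (0:ℝ) := by
        have := (Real.hasDerivAt_log (by norm_num : (1:ℝ) - c * 0 ≠ 0)).comp 0 hin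
        simp at this; exact this
      have hslope := hasDerivAt_iff_tendsto_slope.mp hd
      have : Tendsto (slope (fun s : ℝ => Real.log (1 - c * s)) 0) (𝓝[>] (0:ℝ)) (𝓝 (-c)) :=
        hslope.mono_left (nhdsWithin_mono _ (fun x hx => ne_of_gt hx))
      apply this.congr
      intro s
      simp [slope_def_field, div_eq_inv_mul]
    have lK : Tendsto K (𝓝[>] (0:ℝ)) (𝓝 0) := by
      have := (l1.mul l2).neg
      rw [show -((0:ℝ) * -c) = 0 by ring] at this
      apply this.congr'
      filter_upwards [self_mem_nhdsWithin] with s hs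
      have hs0 : s ≠ 0 := ne_of_gt hs
      rw [hKdef]
      field_simp
    have lcomp : Tendsto (fun t : ℝ => 1 - t) (𝓝[<] (1:ℝ)) (𝓝[>] (0:ℝ)) := by
      apply tendsto_nhdsWithin_of_tendsto_nhds_of_eventually_within
      · have hco : Continuous (fun t : ℝ => 1 - t) := continuous_const.sub continuous_id
        have : Tendsto (fun t : ℝ => 1 - t) (𝓝 (1:ℝ)) (𝓝 0) := by
          simpa using hco.tendsto (1:ℝ)
        exact this.mono_left nhdsWithin_le_nhds
      · filter_upwards [self_mem_nhdsWithin] with t ht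
        simp only [Set.mem_Iio] at ht
        simp [Set.mem_Ioi]
        linarith
    have : Tendsto (fun t : ℝ => K (1 - t)) (𝓝[<] (1:ℝ)) (𝓝 0) := lK.comp lcomp
    apply this.congr'
    filter_upwards [Ioo_mem_nhdsLT_of_mem (by norm_num : (1:ℝ) ∈ Set.Ioc (0:ℝ) 1)] with t ht
    have h1t : 0 < 1 - t := by linarith [ht.2]
    have hat : 0 < a + b * t := by nlinarith [ht.1]
    have hval : 1 - c * (1 - t) = (a + b * t) / (a + b) := by
      rw [hcdef]; field_simp; ring
    rw [hKdef, hHdef]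
    simp only []
    rw [hval, Real.log_div hat.ne' hab.ne']
  have hint' : IntervalIntegrable (fun x => b * f x - h x) volume 0 1 := by
    rw [intervalIntegrable_iff_integrableOn_Ioo_of_le (by norm_num)]
    exact (hf_int.const_mul b).sub hh_int
  have hftc := intervalIntegral.integral_eq_sub_of_hasDerivAt_of_tendsto
    (by norm_num : (0:ℝ) < 1) hHderiv hint' hH0 hH1
  rw [sub_zero] at hftc
  have e1 : ∫ x in Set.Ioo (0:ℝ) 1, (b * f x - h x) = 0 := by
    rw [intervalIntegral.integral_of_le (by norm_num : (0:ℝ) ≤ 1),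
      integral_Ioc_eq_integral_Ioo] at hftc
    exact hftc
  have e2 : ∫ x in Set.Ioo (0:ℝ) 1, (b * f x - h x)
      = b * (∫ x in Set.Ioo (0:ℝ) 1, f x) - ∫ x in Set.Ioo (0:ℝ) 1, h x := by
    rw [integral_sub (hf_int.const_mul b) hh_int, MeasureTheory.integral_const_mul]
  have e3 : b * (∫ x in Set.Ioo (0:ℝ) 1, f x) = ∫ x in Set.Ioo (0:ℝ) 1, h x := by
    linarith [e1, e2.symm.trans e1]
  rw [hsub2, ← e3]
  field_simp

theorem stmt_16 (p₂ : ℝ) (h0 : 0 < p₂) (h1 : p₂ ≤ 1) :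
    ∫ t in Set.Ioo (0 : ℝ) 1, (-Real.log (1 - t)) / ((1 - p₂) + 2 * p₂ * t) =
      (1 / (2 * p₂)) *
        ∫ t in Set.Ioo (0 : ℝ) (2 * p₂ / (1 + p₂)), (-Real.log (1 - t)) / t := by
  rcases lt_or_eq_of_le h1 with hlt | heq
  · have := dilog_aux (1 - p₂) (2 * p₂) (by linarith) (by linarith)
    rw [show (1 - p₂) + 2 * p₂ = 1 + p₂ from by ring] at this
    exact this
  · subst heq
    have hset : (2:ℝ) * 1 / (1 + 1) = 1 := by norm_num
    rw [hset]
    have hp : ∀ t : ℝ, -Real.log (1 - t) / ((1 - 1) + 2 * 1 * t)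
        = (1 / (2 * 1)) * (-Real.log (1 - t) / t) := by
      intro t; ring
    simp only [hp]
    rw [MeasureTheory.integral_const_mul]
end
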